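/- arXiv:1910.09672 — 4 statements merged into one kernel-verified Lean document; each statement's English description precedes it below -/
import Mathlib

section
/- Let D := 1 − 4x − 2tx + t²x² in the ring (ℚ[[t]])[[x]]. Then: (i) there exists a unique s ∈ (ℚ[[t]])[[x]] with s² = D whose constant coefficient equals 1; (ii) the element 2(1+t) is a unit of ℚ[[t]], and the two series f₊ := (2(1+t))⁻¹·(1 + tx + s) and f₋ := (2(1+t))⁻¹·(1 + tx − s) both satisfy f = (1+t)·f² − t·x·f + x; (iii) every solution of this equation in (ℚ[[t]])[[x]] equals f₊ or f₋. -/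
/-!
STATEMENT 1: In `(ℚ[[t]])[[x]]`, let `D := 1 − 4x − 2tx + t²x²`.  Then:
(i) there is a unique `s` with `s² = D` and constant coefficient `1`;
(ii) `2(1+t)` is a unit of `ℚ[[t]]`, and `f± := (2(1+t))⁻¹·(1 + tx ± s)` both satisfy
`f = (1+t)·f² − t·x·f + x`;
(iii) every solution of this equation equals `f₊` or `f₋`.
-/

noncomputable section

/-- The element `t`, i.e. the coefficient-ring variable, viewed in `(ℚ[[t]])[[x]]`. -/
def tS : PowerSeries (PowerSeries ℚ) := PowerSeries.C PowerSeries.X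

/-- `D = 1 − 4x − 2tx + t²x²` in `(ℚ[[t]])[[x]]`. -/
def DS : PowerSeries (PowerSeries ℚ) :=
  1 - 4 * PowerSeries.X - 2 * tS * PowerSeries.X + tS ^ 2 * PowerSeries.X ^ 2

/-- `(2(1+t))⁻¹`, computed in `ℚ[[t]]` and viewed as a constant of `(ℚ[[t]])[[x]]`. -/
def cS : PowerSeries (PowerSeries ℚ) :=
  PowerSeries.C ((2 * (1 + PowerSeries.X) : PowerSeries ℚ)⁻¹)

/-- The equation `f = (1+t)·f² − t·x·f + x`. -/
def EqS (f : PowerSeries (PowerSeries ℚ)) : Prop :=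
  f = (1 + tS) * f ^ 2 - tS * PowerSeries.X * f + PowerSeries.X

/-! `(ℚ[[t]])[[x]]` is `x`-adically complete, hence Henselian, and `1` is a simple
root of `Y² − D` modulo `x`, so `D` has a square root with constant coefficient `1`; it is unique
because the other square roots are its negatives. The equation is the quadratic
`(1+t)f² − (1+tx)f + x = 0` with discriminant `D`, and since `2(1+t)` is a unit the quadratic
formula holds verbatim in this integral domain. -/

theorem quadratic_eq_zero_iff_of_mul_eq_one {R : Type*} [CommRing R] [NoZeroDivisors R]
    {a b c s u : R} (hu : 2 * a * u = 1) (hs : discrim a b c = s * s) (x : R) :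
    a * (x * x) + b * x + c = 0 ↔ x = u * (-b + s) ∨ x = u * (-b - s) := by
  rw [discrim] at hs
  have hfactor : a * (x * x) + b * x + c = 0 ↔ (2 * a * x + b - s) * (2 * a * x + b + s) = 0 := by
    constructor
    · intro h
      linear_combination 4 * a * h + hs
    · intro h
      -- `4a` is invertible: `4a · au² = (2au)² = 1`.
      linear_combination (a * u ^ 2) * h - (a * u ^ 2) * hs
        - (a * (x * x) + b * x + c) * (1 + 2 * a * u) * hu
  rw [hfactor, mul_eq_zero]
  refine or_congr ⟨fun h => ?_, fun h => ?_⟩ ⟨fun h => ?_, fun h => ?_⟩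
  · linear_combination u * h - x * hu
  · rw [h]; linear_combination (-b + s) * hu
  · linear_combination u * h - x * hu
  · rw [h]; linear_combination (-b - s) * hu

namespace PowerSeries

variable {R : Type*} [CommRing R]

theorem exists_sq_eq_of_constantCoeff_eq_one (h2 : IsUnit (2 : R)) {f : R⟦X⟧}
    (hf : constantCoeff f = 1) : ∃ s : R⟦X⟧, s ^ 2 = f ∧ constantCoeff s = 1 := by
  let p : Polynomial R⟦X⟧ := Polynomial.X ^ 2 - Polynomial.C f
  have hp : p.Monic := Polynomial.monic_X_pow_sub_C f two_ne_zero
  have hroot : p.eval 1 ∈ Ideal.span {X} := by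
    rw [Ideal.mem_span_singleton, X_dvd_iff]
    simp [p, hf]
  have hsimple : IsUnit (Ideal.Quotient.mk (Ideal.span {X}) ((Polynomial.derivative p).eval 1)) := by
    refine IsUnit.map _ (isUnit_iff_constantCoeff.mpr ?_)
    simpa [p, one_add_one_eq_two, map_ofNat] using h2
  obtain ⟨s, hs, hs1⟩ := HenselianRing.is_henselian p hp 1 hroot hsimple
  refine ⟨s, by simpa [p, sub_eq_zero] using hs, ?_⟩
  rw [Ideal.mem_span_singleton, X_dvd_iff, map_sub, map_one, sub_eq_zero] at hs1
  exact hs1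

theorem eq_of_sq_eq_of_constantCoeff_eq_one [NoZeroDivisors R] (h2 : (2 : R) ≠ 0)
    {s s' : R⟦X⟧} (h : s ^ 2 = s' ^ 2) (hs : constantCoeff s = 1)
    (hs' : constantCoeff s' = 1) : s = s' := by
  refine (sq_eq_sq_iff_eq_or_eq_neg.mp h).resolve_right fun hneg => h2 ?_
  have := congrArg constantCoeff hneg
  rw [map_neg, hs, hs'] at this
  linear_combination this

end PowerSeries

open PowerSeries

theorem constantCoeff_DS : constantCoeff DS = 1 := by
  simp [DS]

theorem constantCoeff_two_mul_one_add_X_ne_zero : constantCoeff (2 * (1 + X) : ℚ⟦X⟧) ≠ 0 := by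
  simp [map_ofNat]

theorem two_mul_one_add_tS_mul_cS : 2 * (1 + tS) * cS = 1 := by
  have h := PowerSeries.mul_inv_cancel _ constantCoeff_two_mul_one_add_X_ne_zero
  simpa [tS, cS, map_ofNat] using congrArg (C (R := ℚ⟦X⟧)) h

theorem discrim_eq_DS : discrim (1 + tS) (-(1 + tS * X)) X = DS := by
  rw [discrim, DS]
  ring

theorem eqS_iff (f : ℚ⟦X⟧⟦X⟧) : EqS f ↔ (1 + tS) * (f * f) + -(1 + tS * X) * f + X = 0 := by
  rw [EqS]
  constructor <;> intro h <;> linear_combination -h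

theorem stmt_1 :
    (∃! s : PowerSeries (PowerSeries ℚ),
        s ^ 2 = DS ∧ PowerSeries.constantCoeff s = 1) ∧
    IsUnit (2 * (1 + PowerSeries.X) : PowerSeries ℚ) ∧
    ∀ s : PowerSeries (PowerSeries ℚ),
      s ^ 2 = DS → PowerSeries.constantCoeff s = 1 →
        EqS (cS * (1 + tS * PowerSeries.X + s)) ∧
        EqS (cS * (1 + tS * PowerSeries.X - s)) ∧
        ∀ f : PowerSeries (PowerSeries ℚ), EqS f →
          f = cS * (1 + tS * PowerSeries.X + s) ∨
          f = cS * (1 + tS * PowerSeries.X - s) := by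
  have h2 : IsUnit (2 : ℚ⟦X⟧) := by simp [isUnit_iff_constantCoeff, map_ofNat]
  obtain ⟨s₀, hs₀⟩ := exists_sq_eq_of_constantCoeff_eq_one h2 constantCoeff_DS
  refine ⟨⟨s₀, hs₀, fun s hs => ?_⟩,
    isUnit_iff_constantCoeff.mpr constantCoeff_two_mul_one_add_X_ne_zero.isUnit, fun s hs _ => ?_⟩
  · exact eq_of_sq_eq_of_constantCoeff_eq_one h2.ne_zero (hs.1.trans hs₀.1.symm) hs.2 hs₀.2
  have hroots := quadratic_eq_zero_iff_of_mul_eq_one two_mul_one_add_tS_mul_cS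
    (discrim_eq_DS.trans (hs.symm.trans (sq s)))
  simp only [← eqS_iff, neg_neg] at hroots
  exact ⟨(hroots _).mpr (Or.inl rfl), (hroots _).mpr (Or.inr rfl), fun f => (hroots f).mp⟩

end
end

section
/- Let D := 1 − 4x − 2tx + t²x² in (ℚ[[t]])[[x]], let s be the unique square root of D with constant coefficient 1, and set f± := (2(1+t))⁻¹·(1 + tx ± s). Then f₋ has constant coefficient 0 and its coefficient of x¹ equals 1, while f₊ has constant coefficient (1+t)⁻¹ and its coefficient of x¹ equals −(1+t)⁻¹; in particular, evaluating the x¹-coefficients at t = 0 gives 1 for f₋ and −1 for f₊. Consequently, f₋ is the unique solution of f = (1+t)·f² − t·x·f + x in (ℚ[[t]])[[x]] with constant coefficient 0. -/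
/-!
STATEMENT 2: In `(ℚ[[t]])[[x]]`, let `D := 1 − 4x − 2tx + t²x²`, let `s` be the unique
square root of `D` with constant coefficient `1`, and set `f± := (2(1+t))⁻¹·(1 + tx ± s)`.
Then `f₋` has constant coefficient `0` and `x¹`-coefficient `1`, while `f₊` has constant
coefficient `(1+t)⁻¹` and `x¹`-coefficient `−(1+t)⁻¹`; evaluating the `x¹`-coefficients at
`t = 0` gives `1` for `f₋` and `−1` for `f₊`.  Consequently `f₋` is the unique solution of
`f = (1+t)·f² − t·x·f + x` with constant coefficient `0`.
-/

/-!
`f₋` is the quadratic-formula root of `(1+t)f² − (1+tx)f + x = 0`, whose discriminant is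
`(1+tx)² − 4(1+t)x = D`. Its low coefficients come from `[x¹](s²) = 2·[x¹]s`. For uniqueness,
two solutions `f, g` satisfy `(f − g)(1 + tx − (1+t)(f + g)) = 0`, and the second factor has
constant coefficient `1` when `f` and `g` have constant coefficient `0`.
-/

noncomputable section

open PowerSeries

theorem fixedPoint_quadratic_of_sq_eq_discrim {A : Type*} [CommRing A] {a b c k s : A}
    (hk : k * (2 * a) = 1) (hs : s ^ 2 = (1 + b) ^ 2 - 4 * a * c) :
    k * (1 + b - s) = a * (k * (1 + b - s)) ^ 2 - b * (k * (1 + b - s)) + c := by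
  linear_combination
    (-(a * k ^ 2)) * hs + (c * (1 + k * (2 * a)) - k * (1 + b) * (1 + b - s)) * hk

theorem PowerSeries.eq_of_fixedPoint_quadratic {R : Type*} [CommRing R] [IsDomain R]
    {a b c f g : R⟦X⟧}
    (hf : f = a * f ^ 2 - b * f + c) (hg : g = a * g ^ 2 - b * g + c)
    (h : constantCoeff (1 + b - a * (f + g)) ≠ 0) : f = g := by
  have hfactor : (f - g) * (1 + b - a * (f + g)) = 0 := by linear_combination hf - hg
  rcases mul_eq_zero.mp hfactor with hfg | hzero
  · exact sub_eq_zero.mp hfg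
  · exact absurd (by rw [hzero, map_zero]) h

theorem DS_eq : DS = (1 + tS * X) ^ 2 - 4 * (1 + tS) * X := by
  rw [DS]; ring

theorem inv_two_mul_two : (2 : ℚ⟦X⟧)⁻¹ * 2 = 1 :=
  PowerSeries.inv_mul_cancel 2 (by simp [map_ofNat])

theorem inv_two_mul_one_add_X_mul : (2 * (1 + X) : ℚ⟦X⟧)⁻¹ * (2 * (1 + X)) = 1 :=
  PowerSeries.inv_mul_cancel _ (by simp [map_ofNat])

theorem inv_two_mul_one_add_X_mul_two : (2 * (1 + X) : ℚ⟦X⟧)⁻¹ * 2 = (1 + X)⁻¹ := by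
  rw [PowerSeries.mul_inv_rev, mul_assoc, inv_two_mul_two, mul_one]

theorem cS_mul : cS * (2 * (1 + tS)) = 1 := by
  have h2 : (2 * (1 + tS) : ℚ⟦X⟧⟦X⟧) = C (2 * (1 + X)) := by simp [tS, map_ofNat]
  rw [cS, h2, ← map_mul, inv_two_mul_one_add_X_mul, map_one]

theorem constantCoeff_cS_mul (g : ℚ⟦X⟧⟦X⟧) :
    constantCoeff (cS * g) = (2 * (1 + X))⁻¹ * constantCoeff g := by
  rw [cS, map_mul, constantCoeff_C]

theorem coeff_cS_mul (n : ℕ) (g : ℚ⟦X⟧⟦X⟧) :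
    coeff n (cS * g) = (2 * (1 + X))⁻¹ * coeff n g :=
  coeff_C_mul _ _ _

theorem constantCoeff_tS_mul_X : constantCoeff (tS * X) = 0 := by
  simp

theorem coeff_one_tS_mul_X : coeff 1 (tS * X) = X := by
  simp [tS]

theorem coeff_one_DS : coeff 1 DS = -4 - 2 * X := by
  simp [DS, tS, map_ofNat, coeff_one_mul]

theorem coeff_one_of_sq_eq_DS {s : ℚ⟦X⟧⟦X⟧} (hs : s ^ 2 = DS) (hs0 : constantCoeff s = 1) :
    coeff 1 s = -2 - X := by
  have h := congrArg (coeff 1) hs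
  rw [coeff_one_pow, hs0, coeff_one_DS] at h
  have h2 : (2 : ℚ⟦X⟧) ≠ 0 := ne_zero_of_map (f := constantCoeff) (by simp [map_ofNat])
  exact mul_left_cancel₀ h2 (by linear_combination h)

section Roots

variable {s : ℚ⟦X⟧⟦X⟧}

theorem constantCoeff_cS_mul_sub (hs0 : constantCoeff s = 1) :
    constantCoeff (cS * (1 + tS * X - s)) = 0 := by
  simp [constantCoeff_cS_mul, constantCoeff_tS_mul_X, hs0]

theorem constantCoeff_cS_mul_add (hs0 : constantCoeff s = 1) :
    constantCoeff (cS * (1 + tS * X + s)) = (1 + X)⁻¹ := by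
  rw [constantCoeff_cS_mul, map_add, map_add, map_one, constantCoeff_tS_mul_X, hs0]
  linear_combination inv_two_mul_one_add_X_mul_two

theorem coeff_one_cS_mul_sub (hs1 : coeff 1 s = -2 - X) :
    coeff 1 (cS * (1 + tS * X - s)) = 1 := by
  rw [coeff_cS_mul, map_sub, map_add, coeff_one_tS_mul_X, hs1, coeff_one, if_neg one_ne_zero]
  linear_combination inv_two_mul_one_add_X_mul

theorem coeff_one_cS_mul_add (hs1 : coeff 1 s = -2 - X) :
    coeff 1 (cS * (1 + tS * X + s)) = -(1 + X)⁻¹ := by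
  rw [coeff_cS_mul, map_add, map_add, coeff_one_tS_mul_X, hs1, coeff_one, if_neg one_ne_zero]
  linear_combination -inv_two_mul_one_add_X_mul_two

end Roots

theorem stmt_2 :
    ∀ s : PowerSeries (PowerSeries ℚ),
      s ^ 2 = DS → PowerSeries.constantCoeff s = 1 →
      (∀ s' : PowerSeries (PowerSeries ℚ),
          s' ^ 2 = DS → PowerSeries.constantCoeff s' = 1 → s' = s) →
      PowerSeries.constantCoeff
          (cS * (1 + tS * PowerSeries.X - s)) = 0 ∧
      PowerSeries.coeff 1 (cS * (1 + tS * PowerSeries.X - s)) = 1 ∧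
      PowerSeries.constantCoeff (cS * (1 + tS * PowerSeries.X + s)) =
        ((1 + PowerSeries.X : PowerSeries ℚ))⁻¹ ∧
      PowerSeries.coeff 1 (cS * (1 + tS * PowerSeries.X + s)) =
        -((1 + PowerSeries.X : PowerSeries ℚ))⁻¹ ∧
      PowerSeries.constantCoeff
          (PowerSeries.coeff 1 (cS * (1 + tS * PowerSeries.X - s))) = 1 ∧
      PowerSeries.constantCoeff
          (PowerSeries.coeff 1 (cS * (1 + tS * PowerSeries.X + s))) = -1 ∧
      EqS (cS * (1 + tS * PowerSeries.X - s)) ∧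
      ∀ f : PowerSeries (PowerSeries ℚ),
        EqS f → PowerSeries.constantCoeff f = 0 →
          f = cS * (1 + tS * PowerSeries.X - s) := by
  intro s hs hs0 _
  have hs1 := coeff_one_of_sq_eq_DS hs hs0
  have hm0 := constantCoeff_cS_mul_sub hs0
  have hm1 := coeff_one_cS_mul_sub hs1
  have hp1 := coeff_one_cS_mul_add hs1
  have hEq : EqS (cS * (1 + tS * X - s)) :=
    fixedPoint_quadratic_of_sq_eq_discrim cS_mul (hs.trans DS_eq)
  refine ⟨hm0, hm1, constantCoeff_cS_mul_add hs0, hp1, by rw [hm1, map_one],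
    by simp [hp1, constantCoeff_inv], hEq, fun f hf hf0 => eq_of_fixedPoint_quadratic hf hEq ?_⟩
  simp [hf0, hs0, tS]

end
end

section
/- Fix r ≥ 1, k ≥ 2, a partition of {1,…,r} into nonempty pairwise disjoint sets S₁,…,S_k, and nonnegative integers p₁,…,p_k; set p := p₁ + ⋯ + p_k + k − 2. In the multivariate power series ring ℚ[[x₁,…,x_r]], set u_i := ∏_{j∈S_i}(1−x_j) and u := ∏_{j=1}^r (1−x_j) (which are units), and define G_i := (−1)^{p_i}·(u_i⁻¹ − 1) for 1 ≤ i ≤ k and G := (−1)^p·(u⁻¹ − 1). Then (−1)^p + G and each (−1)^{p_i} + G_i are units, and G = G²·((−1)^p + G)⁻¹ + (−1)^{p−1}·( ∏_{i=1}^k (−1)^{p_i}·((−1)^{p_i} + G_i)⁻¹ − 1 ). -/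
/-!
STATEMENT 4: Fix `r ≥ 1`, `k ≥ 2`, a partition of `{1,…,r}` into nonempty pairwise
disjoint sets `S₁,…,S_k`, and nonnegative integers `p₁,…,p_k`; set
`p := p₁ + ⋯ + p_k + k − 2`.  In `ℚ[[x₁,…,x_r]]` set `u_i := ∏_{j∈S_i}(1−x_j)` and
`u := ∏_{j=1}^r (1−x_j)` (units), and define `G_i := (−1)^{p_i}·(u_i⁻¹ − 1)` and
`G := (−1)^p·(u⁻¹ − 1)`.  Then `(−1)^p + G` and each `(−1)^{p_i} + G_i` are units, and
`G = G²·((−1)^p + G)⁻¹ + (−1)^{p−1}·(∏_i (−1)^{p_i}·((−1)^{p_i} + G_i)⁻¹ − 1)`.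
-/

noncomputable section

/-- `∏_{j ∈ s} (1 - x_j)` in `ℚ[[x₁,…,x_r]]`. -/
def uu (r : ℕ) (s : Finset (Fin r)) : MvPowerSeries (Fin r) ℚ :=
  ∏ j ∈ s, (1 - MvPowerSeries.X j)

/-- `(−1)^q · ((∏_{j ∈ s} (1 - x_j))⁻¹ − 1)` in `ℚ[[x₁,…,x_r]]`. -/
def GG (r : ℕ) (q : ℕ) (s : Finset (Fin r)) : MvPowerSeries (Fin r) ℚ :=
  (-1) ^ q * ((uu r s)⁻¹ - 1)

/-!
With `u := uu r s`, `e := (-1)^q` and `G := e (u⁻¹ - 1)`, one has `e + G = e u⁻¹`, so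
`(e + G)⁻¹ = e u` and `e (e + G)⁻¹ = u`. Hence the product over the blocks of the partition is
`∏ᵢ uu r (S i) = uu r univ`, and the recursion collapses to the identity
`e (u⁻¹ - 1) = e (u⁻¹ - 1)² u - e (u - 1)`, which only uses `e² = 1` and `u u⁻¹ = 1`.
-/

open MvPowerSeries

lemma constantCoeff_uu (r : ℕ) (s : Finset (Fin r)) : constantCoeff (uu r s) = 1 := by
  simp [uu, map_prod]

lemma isUnit_uu (r : ℕ) (s : Finset (Fin r)) : IsUnit (uu r s) := by
  simp [isUnit_iff_constantCoeff, constantCoeff_uu]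

lemma uu_mul_inv (r : ℕ) (s : Finset (Fin r)) : uu r s * (uu r s)⁻¹ = 1 :=
  MvPowerSeries.mul_inv_cancel _ (by simp [constantCoeff_uu])

lemma uu_univ_eq_prod {r k : ℕ} (S : Fin k → Finset (Fin r))
    (hdisj : ∀ i j, i ≠ j → Disjoint (S i) (S j)) (hcover : ∀ x : Fin r, ∃ i, x ∈ S i) :
    uu r Finset.univ = ∏ i, uu r (S i) := by
  have hU : (Finset.univ : Finset (Fin r)) = Finset.univ.biUnion S := by
    ext x
    simp [hcover x]
  rw [hU, uu, Finset.prod_biUnion fun i _ j _ hij => hdisj i j hij]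
  rfl

lemma neg_one_pow_mul_self {R : Type*} [Monoid R] [HasDistribNeg R] (q : ℕ) :
    (-1 : R) ^ q * (-1) ^ q = 1 := by
  rw [← pow_add, (Even.add_self q).neg_one_pow]

lemma neg_one_pow_add_GG (r q : ℕ) (s : Finset (Fin r)) :
    (-1) ^ q + GG r q s = (-1) ^ q * (uu r s)⁻¹ := by
  rw [GG]
  ring

lemma neg_one_pow_add_GG_mul (r q : ℕ) (s : Finset (Fin r)) :
    ((-1) ^ q + GG r q s) * ((-1) ^ q * uu r s) = 1 := by
  rw [neg_one_pow_add_GG]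
  linear_combination (uu r s)⁻¹ * uu r s * neg_one_pow_mul_self (R := MvPowerSeries (Fin r) ℚ) q + uu_mul_inv r s

lemma isUnit_neg_one_pow_add_GG (r q : ℕ) (s : Finset (Fin r)) :
    IsUnit ((-1) ^ q + GG r q s) :=
  IsUnit.of_mul_eq_one _ (neg_one_pow_add_GG_mul r q s)

lemma neg_one_pow_add_GG_inv (r q : ℕ) (s : Finset (Fin r)) :
    ((-1) ^ q + GG r q s)⁻¹ = (-1) ^ q * uu r s := by
  refine (MvPowerSeries.inv_eq_iff_mul_eq_one ?_).2 ?_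
  · simp [neg_one_pow_add_GG, constantCoeff_inv, constantCoeff_uu]
  · rw [mul_comm]
    exact neg_one_pow_add_GG_mul r q s

lemma neg_one_pow_mul_neg_one_pow_add_GG_inv (r q : ℕ) (s : Finset (Fin r)) :
    (-1) ^ q * ((-1) ^ q + GG r q s)⁻¹ = uu r s := by
  rw [neg_one_pow_add_GG_inv, ← mul_assoc, neg_one_pow_mul_self, one_mul]

lemma GG_eq_sq_mul_inv_add (r q : ℕ) (s : Finset (Fin r)) :
    GG r q s = GG r q s ^ 2 * ((-1) ^ q + GG r q s)⁻¹ + (-1) ^ (q + 1) * (uu r s - 1) := by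
  rw [neg_one_pow_add_GG_inv, GG, pow_succ]
  linear_combination (-((-1) ^ q * ((uu r s)⁻¹ - 1) ^ 2 * uu r s)) * neg_one_pow_mul_self (R := MvPowerSeries (Fin r) ℚ) q +
    (-((-1) ^ q * ((uu r s)⁻¹ - 2))) * uu_mul_inv r s

theorem stmt_4_general (r k : ℕ)
    (S : Fin k → Finset (Fin r))
    (hdisj : ∀ i j, i ≠ j → Disjoint (S i) (S j))
    (hcover : ∀ x : Fin r, ∃ i, x ∈ S i)
    (p : Fin k → ℕ) :
    IsUnit (uu r Finset.univ) ∧ (∀ i, IsUnit (uu r (S i))) ∧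
    IsUnit ((-1) ^ ((∑ i, p i) + k - 2) + GG r ((∑ i, p i) + k - 2) Finset.univ) ∧
    (∀ i, IsUnit ((-1) ^ (p i) + GG r (p i) (S i))) ∧
    GG r ((∑ i, p i) + k - 2) Finset.univ =
      (GG r ((∑ i, p i) + k - 2) Finset.univ) ^ 2 *
        ((-1) ^ ((∑ i, p i) + k - 2) + GG r ((∑ i, p i) + k - 2) Finset.univ)⁻¹
      + (-1) ^ ((∑ i, p i) + k - 2 + 1) *
          ((∏ i, (-1) ^ (p i) * ((-1) ^ (p i) + GG r (p i) (S i))⁻¹) - 1) := by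
  refine ⟨isUnit_uu r _, fun i => isUnit_uu r _, isUnit_neg_one_pow_add_GG r _ _,
    fun i => isUnit_neg_one_pow_add_GG r _ _, ?_⟩
  simp only [neg_one_pow_mul_neg_one_pow_add_GG_inv, ← uu_univ_eq_prod S hdisj hcover]
  exact GG_eq_sq_mul_inv_add r _ _

theorem stmt_4 (r k : ℕ) (hr : 1 ≤ r) (hk : 2 ≤ k)
    (S : Fin k → Finset (Fin r))
    (hne : ∀ i, (S i).Nonempty)
    (hdisj : ∀ i j, i ≠ j → Disjoint (S i) (S j))
    (hcover : ∀ x : Fin r, ∃ i, x ∈ S i)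
    (p : Fin k → ℕ) :
    IsUnit (uu r Finset.univ) ∧ (∀ i, IsUnit (uu r (S i))) ∧
    IsUnit ((-1) ^ ((∑ i, p i) + k - 2) + GG r ((∑ i, p i) + k - 2) Finset.univ) ∧
    (∀ i, IsUnit ((-1) ^ (p i) + GG r (p i) (S i))) ∧
    GG r ((∑ i, p i) + k - 2) Finset.univ =
      (GG r ((∑ i, p i) + k - 2) Finset.univ) ^ 2 *
        ((-1) ^ ((∑ i, p i) + k - 2) + GG r ((∑ i, p i) + k - 2) Finset.univ)⁻¹
      + (-1) ^ ((∑ i, p i) + k - 2 + 1) *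
          ((∏ i, (-1) ^ (p i) * ((-1) ^ (p i) + GG r (p i) (S i))⁻¹) - 1) :=
  stmt_4_general r k S hdisj hcover p

end
end

section
/- Let k ≥ 1 and let P₁,…,P_k be finite types, each with a distinguished element ⊥_i ∈ P_i and a rank function d_i : P_i → ℤ, and suppose each P_i is balanced, i.e. ∑_{p ∈ P_i} (−1)^{d_i(p)} = 0. Define the k-fold reduced product to be the disjoint union ( ∏_{i=1}^k (P_i∖{⊥_i}) ) ⊔ {⋆}, with rank d(p₁,…,p_k) := ∑_{i=1}^k d_i(p_i) on the product part and d(⋆) := ∑_{i=1}^k d_i(⊥_i) + k − 1. Then the k-fold reduced product is balanced: ∑ over all its elements of (−1)^d equals 0. -/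
/-!
Removing the bottom element from a balanced `P i` leaves alternating sum `-(-1)^{d_i(⊥_i)}`,
and alternating sums are multiplicative on products, so the product part of the reduced product
contributes `(-1)^k (-1)^{∑ d_i(⊥_i)}`. The extra point `⋆` has rank `∑ d_i(⊥_i) + k - 1`,
which is exactly the parity needed to cancel this.
-/

open Finset

lemma zpow_sum_of_ne_zero {G₀ ι : Type*} [CommGroupWithZero G₀] {a : G₀} (ha : a ≠ 0)
    (s : Finset ι) (n : ι → ℤ) : a ^ ∑ i ∈ s, n i = ∏ i ∈ s, a ^ n i := by
  induction s using Finset.cons_induction with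
  | empty => simp
  | cons i s hi ih => rw [sum_cons, prod_cons, zpow_add₀ ha, ih]

lemma Fintype.sum_subtype_ne_eq_neg {α M : Type*} [Fintype α] [DecidableEq α] [AddCommGroup M]
    {f : α → M} (hf : ∑ x, f x = 0) (a : α) : ∑ x : {x // x ≠ a}, f x = -f a := by
  rw [Fintype.sum_eq_add_sum_subtype_ne f a] at hf
  exact eq_neg_of_add_eq_zero_right hf

lemma Fintype.sum_pi_neg_one_zpow_sum {K ι : Type*} [Field K] [Fintype ι] [DecidableEq ι]
    {κ : ι → Type*} [∀ i, Fintype (κ i)] (d : ∀ i, κ i → ℤ) :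
    ∑ f : ∀ i, κ i, (-1 : K) ^ (∑ i, d i (f i)) = ∏ i, ∑ p, (-1 : K) ^ d i p := by
  simp only [zpow_sum_of_ne_zero (by norm_num : (-1 : K) ≠ 0), Fintype.prod_sum]

theorem stmt_6_general (k : ℕ) (P : Fin k → Type)
    [∀ i, Fintype (P i)] [∀ i, DecidableEq (P i)]
    (bot : ∀ i, P i) (d : ∀ i, P i → ℤ)
    (hbal : ∀ i, ∑ p : P i, (-1 : ℚ) ^ (d i p) = 0) :
    ∑ z : ((i : Fin k) → {p : P i // p ≠ bot i}) ⊕ Unit,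
      (-1 : ℚ) ^ (Sum.elim (fun f => ∑ i, d i (f i).1)
        (fun _ => (∑ i, d i (bot i)) + (k : ℤ) - 1) z) = 0 := by
  have hne : (-1 : ℚ) ≠ 0 := by norm_num
  have hprod : ∑ f : (i : Fin k) → {p : P i // p ≠ bot i}, (-1 : ℚ) ^ (∑ i, d i (f i).1)
      = (-1) ^ k * (-1) ^ (∑ i, d i (bot i)) := by
    rw [Fintype.sum_pi_neg_one_zpow_sum (κ := fun i => {p : P i // p ≠ bot i})
      (fun i p => d i p.1)]
    simp only [fun i => Fintype.sum_subtype_ne_eq_neg (hbal i) (bot i), prod_neg, card_univ,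
      Fintype.card_fin, zpow_sum_of_ne_zero hne]
  rw [Fintype.sum_sum_type]
  simp only [Sum.elim_inl, Sum.elim_inr, Fintype.sum_unique, hprod, zpow_sub₀ hne,
    zpow_add₀ hne, zpow_natCast]
  ring

theorem stmt_6 (k : ℕ) (hk : 1 ≤ k) (P : Fin k → Type)
    [∀ i, Fintype (P i)] [∀ i, DecidableEq (P i)]
    (bot : ∀ i, P i) (d : ∀ i, P i → ℤ)
    (hbal : ∀ i, ∑ p : P i, (-1 : ℚ) ^ (d i p) = 0) :
    ∑ z : ((i : Fin k) → {p : P i // p ≠ bot i}) ⊕ Unit,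
      (-1 : ℚ) ^ (Sum.elim (fun f => ∑ i, d i (f i).1)
        (fun _ => (∑ i, d i (bot i)) + (k : ℤ) - 1) z) = 0 :=
  stmt_6_general k P bot d hbal
end
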